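/- For bounded operators A, B between Hilbert spaces, A is below B in the left star order (A*A = A*B and range(A) ⊆ range(B)) if and only if B = A + C for some bounded operator C with range(C) ⊆ range(B) and A*C = 0. -/

import Mathlib

open ContinuousLinearMap

theorem LinearMap.range_sub_le_of_le {R M N : Type*} [Ring R] [AddCommGroup M] [AddCommGroup N]
    [Module R M] [Module R N] {f g : M →ₗ[R] N} {p : Submodule R N}
    (hf : LinearMap.range f ≤ p) (hg : LinearMap.range g ≤ p) : LinearMap.range (f - g) ≤ p := by
  rintro _ ⟨x, rfl⟩
  exact p.sub_mem (hf ⟨x, rfl⟩) (hg ⟨x, rfl⟩)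

theorem stmt12 {H K : Type*} [NormedAddCommGroup H] [InnerProductSpace ℂ H] [CompleteSpace H]
    [NormedAddCommGroup K] [InnerProductSpace ℂ K] [CompleteSpace K]
    (A B : H →L[ℂ] K) :
    ((adjoint A) ∘L A = (adjoint A) ∘L B ∧ LinearMap.range (A : H →ₗ[ℂ] K) ≤ LinearMap.range (B : H →ₗ[ℂ] K)) ↔
    (∃ C : H →L[ℂ] K, LinearMap.range (C : H →ₗ[ℂ] K) ≤ LinearMap.range (B : H →ₗ[ℂ] K) ∧
      (adjoint A) ∘L C = 0 ∧ B = A + C) := by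
  constructor
  · rintro ⟨hAA, hAB⟩
    refine ⟨B - A, ?_, ?_, (add_sub_cancel A B).symm⟩
    · rw [toLinearMap_sub]
      exact LinearMap.range_sub_le_of_le le_rfl hAB
    · rw [comp_sub, hAA, sub_self]
  · rintro ⟨C, hCB, hAC, rfl⟩
    refine ⟨by rw [comp_add, hAC, add_zero], ?_⟩
    have hA : (A : H →ₗ[ℂ] K) = ((A + C : H →L[ℂ] K) : H →ₗ[ℂ] K) - C := by
      rw [toLinearMap_add, add_sub_cancel_right]
    rw [hA]
    exact LinearMap.range_sub_le_of_le le_rfl hCB
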